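/- Let b ∈ 𝕊 be non-real with Re(b) = 0, b b̄ = 0, and let λ, μ ∈ ℝ. Then P = t² + b t + λ + μ b has a split quaternion right zero if and only if λ + μ² = 0 or λ < 0. Moreover, if λ + μ² = 0 then P = (t + μ)(t - μ + b), and if λ < 0 then x = √(-λ) - ½ b (1 + μ/√(-λ)) is a right zero. -/

import Mathlib

/-!
Every split quaternion satisfies `x² = T x - N` with `T = 2 Re x` and `N = x x̄` real, and
`b̄ = -b` turns `b b̄ = 0` into `b² = 0`. Multiplying `P(x) = 0` on the left by `b` gives
`T (b x) = (N - λ) b`. If `T ≠ 0`, then `x = a - c b` with `a, c` real, and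
`P(a - c b) = (a² + λ) + (a - 2ac + μ) b`; as `1, b` are linearly independent, `λ = -a²`.
If `T = 0`, then `N = λ`, so `x² = -λ` and `b x = -μ b`, whence `-λ b = b x² = μ² b`.
The witnesses for the converse are again of the form `a - c b`.
-/

open Polynomial

notation "𝕊" => QuaternionAlgebra ℝ (-1) 0 1

open Quaternion in
theorem QuaternionAlgebra.sq_eq_smul_sub_algebraMap {R : Type*} [CommRing R] {c₁ c₂ c₃ : R}
    (a : ℍ[R,c₁,c₂,c₃]) :
    a ^ 2 = (2 * a.re + c₂ * a.imI) • a - algebraMap R _ (a * star a).re := by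
  rw [coe_algebraMap, ← mul_star_eq_coe, ← mul_coe_eq_smul, ← self_add_star', sq, mul_add,
    add_sub_cancel_right]

theorem Polynomial.X_add_C_mul_X_sub_C_add_C {R : Type*} [Ring R] (m b : R) :
    (X + C m) * (X - C m + C b) = X ^ 2 + C b * X + C (m * b - m ^ 2) := by
  simp only [add_mul, mul_add, mul_sub, X_mul_C, ← C_mul, map_sub, sq]
  abel

section

variable {K A : Type*} [Field K] [Ring A] [Algebra K A] {b : A}

theorem algebraMap_add_smul_eq_zero_iff (hb : b ∉ Set.range (algebraMap K A)) {α β : K} :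
    algebraMap K A α + β • b = 0 ↔ α = 0 ∧ β = 0 := by
  have : Nontrivial A := ⟨⟨b, 0, fun h => hb ⟨0, by simp [h]⟩⟩⟩
  refine ⟨fun h => ?_, fun ⟨hα, hβ⟩ => by simp [hα, hβ]⟩
  have hβ : β = 0 := by
    by_contra hβ
    refine hb ⟨-α / β, ?_⟩
    rw [div_eq_inv_mul, map_mul, ← Algebra.smul_def, map_neg, ← eq_neg_of_add_eq_zero_right h,
      smul_smul, inv_mul_cancel₀ hβ, one_smul]
  subst hβ
  simpa using h

theorem sq_add_mul_add_of_mul_self_eq_zero (hbb : b * b = 0) (a c lam mu : K) :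
    (algebraMap K A a - c • b) ^ 2 + b * (algebraMap K A a - c • b) + algebraMap K A lam
        + mu • b = algebraMap K A (a ^ 2 + lam) + (a - 2 * a * c + mu) • b := by
  simp only [Algebra.algebraMap_eq_smul_one, sq, sub_mul, mul_sub, smul_mul_assoc, mul_smul_comm,
    one_mul, mul_one, hbb, smul_zero]
  module

theorem right_zero_algebraMap_sub_smul_iff (hb : b ∉ Set.range (algebraMap K A))
    (hbb : b * b = 0) (a c lam mu : K) :
    (algebraMap K A a - c • b) ^ 2 + b * (algebraMap K A a - c • b) + algebraMap K A lam
        + mu • b = 0 ↔ a ^ 2 + lam = 0 ∧ a - 2 * a * c + mu = 0 := by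
  rw [sq_add_mul_add_of_mul_self_eq_zero hbb, algebraMap_add_smul_eq_zero_iff hb]

theorem right_zero_of_sq_eq_neg [NeZero (2 : K)] (hbb : b * b = 0) {s lam : K} (hs : s ≠ 0)
    (hsq : s ^ 2 = -lam) (mu : K) :
    (algebraMap K A s - (2⁻¹ * (1 + mu / s)) • b) ^ 2
        + b * (algebraMap K A s - (2⁻¹ * (1 + mu / s)) • b) + algebraMap K A lam + mu • b = 0 := by
  have hre : s ^ 2 + lam = 0 := by linear_combination hsq
  have hcoeff : s - 2 * s * (2⁻¹ * (1 + mu / s)) + mu = 0 := by field_simp; ring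
  rw [sq_add_mul_add_of_mul_self_eq_zero hbb, hre, hcoeff, map_zero, zero_smul, add_zero]

theorem eq_zero_or_eq_neg_sq_of_right_zero (hb : b ∉ Set.range (algebraMap K A))
    (hbb : b * b = 0) {x : A} {T N lam mu : K} (hquad : x ^ 2 = T • x - algebraMap K A N)
    (hx : x ^ 2 + b * x + algebraMap K A lam + mu • b = 0) :
    lam + mu ^ 2 = 0 ∨ ∃ a ≠ 0, lam = -a ^ 2 := by
  have hb0 : b ≠ 0 := fun h => hb ⟨0, by simp [h]⟩
  have hbx : T • (b * x) = (N - lam) • b := by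
    have := congrArg (b * ·) hx
    simp only [mul_add, mul_zero, hquad, mul_sub, mul_smul_comm, ← mul_assoc, hbb, zero_mul,
      smul_zero, Algebra.algebraMap_eq_smul_one, mul_one] at this
    linear_combination (norm := module) this
  rcases eq_or_ne T 0 with rfl | hT
  · left
    rw [zero_smul] at hquad hbx
    obtain rfl : N = lam := by
      rw [eq_comm, smul_eq_zero] at hbx
      exact sub_eq_zero.mp (hbx.resolve_right hb0)
    have hbx_sq₁ : b * x ^ 2 = -N • b := by
      rw [hquad, zero_sub, mul_neg, Algebra.algebraMap_eq_smul_one, mul_smul_comm, mul_one,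
        neg_smul]
    have hbx' : b * x = -mu • b := by linear_combination (norm := module) hx - hquad
    have hbx_sq₂ : b * x ^ 2 = mu ^ 2 • b := by
      rw [sq, ← mul_assoc, hbx', smul_mul_assoc, hbx', smul_smul, neg_mul_neg, sq]
    have key : (N + mu ^ 2) • b = 0 := by linear_combination (norm := module) hbx_sq₁ - hbx_sq₂
    exact (smul_eq_zero.mp key).resolve_right hb0
  · obtain ⟨a, hTa⟩ : ∃ a, T * a = N - lam := ⟨(N - lam) / T, mul_div_cancel₀ _ hT⟩
    have hbx' : b * x = a • b := by
      apply smul_right_injective A hT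
      dsimp only
      rw [hbx, smul_smul, hTa]
    have hform : x = algebraMap K A a - ((a + mu) / T) • b := by
      apply smul_right_injective A hT
      have hc : T * ((a + mu) / T) = a + mu := mul_div_cancel₀ _ hT
      simp only [Algebra.algebraMap_eq_smul_one] at hquad hx ⊢
      linear_combination (norm := module) hx - hquad - hbx' - hTa • (1 : A) + hc • b
    rw [hform, right_zero_algebraMap_sub_smul_iff hb hbb] at hx
    rcases eq_or_ne a 0 with rfl | ha
    · left
      linear_combination hx.1 + mu * hx.2
    · exact Or.inr ⟨a, ha, by linear_combination hx.1⟩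

end

/-- For non-real vectorial `b` with `b b̄ = 0`, the polynomial
`P = t² + b t + λ + μ b` has a right zero iff `λ + μ² = 0` or `λ < 0`.
If `λ + μ² = 0` then `P = (t + μ)(t - μ + b)`; if `λ < 0` then
`x = √(-λ) - ½ b (1 + μ/√(-λ))` is a right zero. -/
theorem zero_iff_of_null_norm (b : 𝕊) (hb : b ∉ Set.range (algebraMap ℝ 𝕊))
    (hb0 : b.re = 0) (hnull : b * star b = 0) (lam mu : ℝ) :
    ((∃ x : 𝕊, x ^ 2 + b * x + (lam : 𝕊) + (mu : 𝕊) * b = 0) ↔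
      lam + mu ^ 2 = 0 ∨ lam < 0) ∧
    (lam + mu ^ 2 = 0 →
      (X + C ((mu : ℝ) : 𝕊)) * (X - C ((mu : ℝ) : 𝕊) + C b) =
        X ^ 2 + C b * X + C ((lam : 𝕊) + (mu : 𝕊) * b)) ∧
    (lam < 0 →
      (((Real.sqrt (-lam) : ℝ) : 𝕊) -
          (2 : ℝ)⁻¹ • (b * (1 + ((mu / Real.sqrt (-lam) : ℝ) : 𝕊)))) ^ 2 +
        b * (((Real.sqrt (-lam) : ℝ) : 𝕊) -
          (2 : ℝ)⁻¹ • (b * (1 + ((mu / Real.sqrt (-lam) : ℝ) : 𝕊)))) +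
        (lam : 𝕊) + (mu : 𝕊) * b = 0) := by
  have hbb : b * b = 0 := by
    rwa [QuaternionAlgebra.star_eq_neg.mpr hb0, mul_neg, neg_eq_zero] at hnull
  have hP (x : 𝕊) : x ^ 2 + b * x + (lam : 𝕊) + (mu : 𝕊) * b
      = x ^ 2 + b * x + algebraMap ℝ 𝕊 lam + mu • b := by
    rw [QuaternionAlgebra.coe_mul_eq_smul, QuaternionAlgebra.coe_algebraMap]
  have hwit (s t : ℝ) :
      (s : 𝕊) - (2 : ℝ)⁻¹ • (b * (1 + (t : 𝕊))) = algebraMap ℝ 𝕊 s - (2⁻¹ * (1 + t)) • b := by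
    rw [← QuaternionAlgebra.coe_one, ← QuaternionAlgebra.coe_add,
      QuaternionAlgebra.mul_coe_eq_smul, smul_smul, QuaternionAlgebra.coe_algebraMap]
  have hsqrt (hlam : lam < 0) : √(-lam) ≠ 0 ∧ √(-lam) ^ 2 = -lam :=
    ⟨(Real.sqrt_pos.mpr (neg_pos.mpr hlam)).ne', Real.sq_sqrt (neg_nonneg.mpr hlam.le)⟩
  simp only [hP, hwit]
  refine ⟨⟨fun ⟨x, hx⟩ => ?_, ?_⟩, fun h => ?_, fun hlam => ?_⟩
  · obtain h | ⟨a, ha, rfl⟩ :=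
      eq_zero_or_eq_neg_sq_of_right_zero hb hbb x.sq_eq_smul_sub_algebraMap hx
    exacts [Or.inl h, Or.inr (neg_neg_iff_pos.mpr (sq_pos_of_ne_zero ha))]
  · rintro (h | hlam)
    · exact ⟨algebraMap ℝ 𝕊 (-mu) - (0 : ℝ) • b,
        (right_zero_algebraMap_sub_smul_iff hb hbb _ _ _ _).mpr ⟨by linear_combination h, by ring⟩⟩
    · exact ⟨_, right_zero_of_sq_eq_neg hbb (hsqrt hlam).1 (hsqrt hlam).2 mu⟩
  · rw [X_add_C_mul_X_sub_C_add_C, show lam = -mu ^ 2 by linear_combination h,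
      QuaternionAlgebra.coe_neg, QuaternionAlgebra.coe_pow, neg_add_eq_sub]
  · exact right_zero_of_sq_eq_neg hbb (hsqrt hlam).1 (hsqrt hlam).2 mu
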